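/- For the loss function ℓ(θ, x) = θ²/2 − (x−θ)²/(θ²+1) with data point x = 0, the non-robust loss θ ↦ ℓ(θ, 0) = θ²/2 + 1/(θ²+1) − 1 has exactly two global minimizers on ℝ, namely θ = √(√2 − 1) and θ = −√(√2 − 1). -/
import Mathlib

lemma key_identity (x : ℝ) : x^2/2 + 1/(x^2+1) - 1 =
    Real.sqrt 2 - 3/2 + (x^2+1-Real.sqrt 2)^2/(2*(x^2+1)) := by
  have hx : (x:ℝ)^2+1 > 0 := by positivity
  have hs : Real.sqrt 2 ^ 2 = 2 := Real.sq_sqrt (by norm_num)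
  field_simp
  nlinarith [hs]

theorem two_global_minimizers :
    {θ : ℝ | ∀ x : ℝ, θ^2/2 + 1/(θ^2+1) - 1 ≤ x^2/2 + 1/(x^2+1) - 1} =
      {Real.sqrt (Real.sqrt 2 - 1), -Real.sqrt (Real.sqrt 2 - 1)} := by
  have hs : Real.sqrt 2 ^ 2 = 2 := Real.sq_sqrt (by norm_num)
  have hs1 : 1 < Real.sqrt 2 := by nlinarith [Real.sqrt_nonneg 2]
  have ha : Real.sqrt (Real.sqrt 2 - 1) ^ 2 = Real.sqrt 2 - 1 :=
    Real.sq_sqrt (by linarith)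
  have hfa : Real.sqrt (Real.sqrt 2 - 1) ^ 2/2 + 1/(Real.sqrt (Real.sqrt 2 - 1) ^ 2+1) - 1
      = Real.sqrt 2 - 3/2 := by
    rw [key_identity, ha]
    have : Real.sqrt 2 - 1 + 1 - Real.sqrt 2 = 0 := by ring
    rw [this]
    ring
  ext θ
  simp only [Set.mem_setOf_eq, Set.mem_insert_iff, Set.mem_singleton_iff]
  constructor
  · intro h
    have hθ : (θ:ℝ)^2+1 > 0 := by positivity
    have h1 := h (Real.sqrt (Real.sqrt 2 - 1))
    rw [hfa, key_identity θ] at h1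
    have h2 : (θ^2+1-Real.sqrt 2)^2/(2*(θ^2+1)) ≤ 0 := by linarith
    have h3 : (θ^2+1-Real.sqrt 2)^2 ≤ 0 := by
      by_contra hc
      push_neg at hc
      have := div_pos hc (by linarith : (0:ℝ) < 2*(θ^2+1))
      linarith
    have h4 : θ^2+1-Real.sqrt 2 = 0 := by nlinarith [sq_nonneg (θ^2+1-Real.sqrt 2)]
    have h5 : θ^2 = Real.sqrt (Real.sqrt 2 - 1) ^ 2 := by rw [ha]; linarith
    exact sq_eq_sq_iff_eq_or_eq_neg.mp h5
  · intro h
    have hθ2 : θ^2 = Real.sqrt 2 - 1 := by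
      rcases h with h | h <;> rw [h] <;> simp [ha]
    intro x
    rw [key_identity θ, key_identity x, hθ2]
    have h0 : Real.sqrt 2 - 1 + 1 - Real.sqrt 2 = 0 := by ring
    rw [h0]
    have h1 : (x^2+1-Real.sqrt 2)^2/(2*(x^2+1)) ≥ 0 := by positivity
    norm_num
    linarith
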